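/- Let A be a ring and M an A-bimodule with ann_l(M) ⊆ ann_r(M). Then the trivial extension A ∝ M is a left fusible ring if and only if A is a left fusible ring and M = 0. -/

import Mathlib

/-!
Suppose `(0, m) = z + r` with `m ≠ 0`, `z * y = 0`, `y ≠ 0` and `r` not a left zero divisor.
Since `r * (0, t) = (0, r₁ t)`, the element `r₁` acts injectively on `M`; from `z₁ = -r₁` we get
`r₁ y₁ = 0`, so `y₁` kills `M` on the left, hence on the right by hypothesis. Then
`r * y = (0, m) * y - z * y = (0, m y₁) = 0`, so `y = 0`, a contradiction. Thus `M = 0`, and then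
`A ∝ M ≅ A`.
-/

open MulOpposite

/-- A nonzero element of a ring is left fusible if it is the sum of a left zero divisor
and a non-left-zero-divisor. The ring is left fusible if every nonzero element is. -/
def LeftFusibleRing (S : Type*) [Ring S] : Prop :=
  ∀ a : S, a ≠ 0 → ∃ z r : S, (∃ y : S, y ≠ 0 ∧ z * y = 0) ∧
    (∀ y : S, r * y = 0 → y = 0) ∧ a = z + r

theorem LeftFusibleRing.of_ringEquiv {R S : Type*} [Ring R] [Ring S] (e : R ≃+* S)
    (h : LeftFusibleRing R) : LeftFusibleRing S := by
  intro a ha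
  obtain ⟨z, r, ⟨y, hy, hzy⟩, hr, hsum⟩ := h (e.symm a) (by simpa using ha)
  refine ⟨e z, e r, ⟨e y, by simpa using hy, by rw [← map_mul, hzy, map_zero]⟩, ?_, ?_⟩
  · intro y' hry'
    have : r * e.symm y' = 0 := e.injective (by simpa using hry')
    simpa using hr _ this
  · rw [← map_add, ← hsum, RingEquiv.apply_symm_apply]

theorem RingEquiv.leftFusibleRing_iff {R S : Type*} [Ring R] [Ring S] (e : R ≃+* S) :
    LeftFusibleRing R ↔ LeftFusibleRing S :=
  ⟨.of_ringEquiv e, .of_ringEquiv e.symm⟩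

namespace TrivSqZeroExt

variable {R M : Type*} [Ring R] [AddCommGroup M] [Module R M] [Module Rᵐᵒᵖ M]

theorem mul_inr (x : TrivSqZeroExt R M) (m : M) : x * inr m = inr (x.fst • m) :=
  ext (mul_zero _) (by simp)

theorem inr_mul (m : M) (x : TrivSqZeroExt R M) : inr m * x = inr (op x.fst • m) :=
  ext (zero_mul _) (by simp)

theorem eq_zero_of_fst_smul_eq_zero {r : TrivSqZeroExt R M}
    (hr : ∀ y : TrivSqZeroExt R M, r * y = 0 → y = 0) {t : M} (ht : r.fst • t = 0) : t = 0 :=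
  inr_injective <| (hr (inr t) (by rw [mul_inr, ht, inr_zero])).trans (inr_zero R).symm

def fstRingEquivOfSubsingleton [Subsingleton M] : TrivSqZeroExt R M ≃+* R where
  toFun := fst
  invFun := inl
  left_inv _ := ext rfl (Subsingleton.elim _ _)
  right_inv _ := rfl
  map_mul' := fst_mul
  map_add' := fst_add

theorem eq_zero_of_inr_eq_add (hann : ∀ a : R, (∀ m : M, a • m = 0) → ∀ m : M, op a • m = 0)
    {m : M} {z r y : TrivSqZeroExt R M} (hsum : inr m = z + r)
    (hr : ∀ y : TrivSqZeroExt R M, r * y = 0 → y = 0) (hzy : z * y = 0) : y = 0 := by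
  have hz : z = inr m - r := eq_sub_of_add_eq hsum.symm
  have hry_fst : r.fst * y.fst = 0 := by simpa [hz] using congrArg fst hzy
  have hy_left : ∀ t : M, y.fst • t = 0 := fun t =>
    eq_zero_of_fst_smul_eq_zero hr (by rw [← mul_smul, hry_fst, zero_smul])
  apply hr
  calc r * y = inr m * y - z * y := by rw [hz, sub_mul, sub_sub_cancel]
    _ = 0 := by rw [inr_mul, hann _ hy_left, inr_zero, hzy, sub_zero]

theorem subsingleton_of_leftFusibleRing [SMulCommClass R Rᵐᵒᵖ M]
    (hann : ∀ a : R, (∀ m : M, a • m = 0) → ∀ m : M, op a • m = 0)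
    (h : LeftFusibleRing (TrivSqZeroExt R M)) : Subsingleton M := by
  refine subsingleton_of_forall_eq 0 fun m => ?_
  by_contra hm
  obtain ⟨z, r, ⟨y, hy, hzy⟩, hr, hsum⟩ := h (inr m) (by simpa [TrivSqZeroExt.ext_iff] using hm)
  exact hy (eq_zero_of_inr_eq_add hann hsum hr hzy)

end TrivSqZeroExt

/-- For an `A`-bimodule `M` with `ann_l(M) ⊆ ann_r(M)`, the trivial extension `A ∝ M`
is a left fusible ring iff `A` is a left fusible ring and `M = 0`. -/
theorem trivSqZeroExt_leftFusible_iff (A M : Type*) [Ring A] [AddCommGroup M]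
    [Module A M] [Module Aᵐᵒᵖ M] [SMulCommClass A Aᵐᵒᵖ M]
    (hann : ∀ a : A, (∀ m : M, a • m = 0) → (∀ m : M, op a • m = 0)) :
    LeftFusibleRing (TrivSqZeroExt A M) ↔ (LeftFusibleRing A ∧ ∀ m : M, m = 0) := by
  refine ⟨fun h => ?_, fun ⟨hA, hM⟩ => ?_⟩
  · have := TrivSqZeroExt.subsingleton_of_leftFusibleRing hann h
    exact ⟨TrivSqZeroExt.fstRingEquivOfSubsingleton.leftFusibleRing_iff.1 h,
      fun m => Subsingleton.elim m 0⟩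
  · have : Subsingleton M := subsingleton_of_forall_eq 0 hM
    exact TrivSqZeroExt.fstRingEquivOfSubsingleton.leftFusibleRing_iff.2 hA
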